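/- Let B be a Hopf algebra, L a normalized commuting 2-cocycle, and σ = L∘(id⊗S)∘Δ. Then for every n ≥ 0, L^{⋆n}∘(id⊗S)∘Δ = σ^{⋆n}, where powers are convolution powers (on B⊗B and B respectively). -/

import Mathlib

open TensorProduct Coalgebra

variable {B : Type} [Ring B] [HopfAlgebra ℂ B]

/-- The comultiplication `Λ = (id ⊗ τ ⊗ id) ∘ (Δ ⊗ Δ)` of `B ⊗ B`. -/
noncomputable def Lam : B ⊗[ℂ] B →ₗ[ℂ] (B ⊗[ℂ] B) ⊗[ℂ] (B ⊗[ℂ] B) :=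
  (TensorProduct.tensorTensorTensorComm ℂ B B B B).toLinearMap ∘ₗ
    TensorProduct.map (comul (R := ℂ)) (comul (R := ℂ))

/-- Convolution of linear functionals w.r.t. a given comultiplication. -/
noncomputable def convWith {M : Type} [AddCommGroup M] [Module ℂ M]
    (Δ : M →ₗ[ℂ] M ⊗[ℂ] M) (φ ψ : M →ₗ[ℂ] ℂ) : M →ₗ[ℂ] ℂ :=
  LinearMap.mul' ℂ ℂ ∘ₗ TensorProduct.map φ ψ ∘ₗ Δ

/-- Convolution powers `φ^{⋆n}` w.r.t. a comultiplication `Δ` and counit `ε` (the 0-th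
power being the counit). -/
noncomputable def convPowWith {M : Type} [AddCommGroup M] [Module ℂ M]
    (Δ : M →ₗ[ℂ] M ⊗[ℂ] M) (ε : M →ₗ[ℂ] ℂ) (φ : M →ₗ[ℂ] ℂ) : ℕ → (M →ₗ[ℂ] ℂ)
  | 0 => ε
  | n + 1 => convWith Δ φ (convPowWith Δ ε φ n)

/-- The counit `δ ⊗ δ` of `B ⊗ B`. -/
noncomputable def counit2 : B ⊗[ℂ] B →ₗ[ℂ] ℂ :=
  LinearMap.mul' ℂ ℂ ∘ₗ TensorProduct.map (counit (R := ℂ)) (counit (R := ℂ))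

/-- `L ⋆ μ = (L ⊗ μ) ∘ Λ : B ⊗ B → B`. -/
noncomputable def LconvMu (L : B ⊗[ℂ] B →ₗ[ℂ] ℂ) : B ⊗[ℂ] B →ₗ[ℂ] B :=
  (TensorProduct.lid ℂ B).toLinearMap ∘ₗ TensorProduct.map L (LinearMap.mul' ℂ B) ∘ₗ Lam

/-- `μ ⋆ L = (μ ⊗ L) ∘ Λ : B ⊗ B → B`. -/
noncomputable def MuConvL (L : B ⊗[ℂ] B →ₗ[ℂ] ℂ) : B ⊗[ℂ] B →ₗ[ℂ] B :=
  (TensorProduct.rid ℂ B).toLinearMap ∘ₗ TensorProduct.map (LinearMap.mul' ℂ B) L ∘ₗ Lam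

/-- `σ = L ∘ (id ⊗ S) ∘ Δ : B → ℂ`. -/
noncomputable def sigma (L : B ⊗[ℂ] B →ₗ[ℂ] ℂ) : B →ₗ[ℂ] ℂ :=
  L ∘ₗ TensorProduct.map LinearMap.id (HopfAlgebra.antipode (R := ℂ)) ∘ₗ comul (R := ℂ)

/-!
Write `T = (id ⊗ S) ∘ Δ`, so that `σ = L ∘ T`, and let `f ⇀ c = c₁ f(c₂)`, `c ↼ f = f(c₁) c₂`
be the hit actions of functionals on a coalgebra; then `ψ ⋆ φ = ψ ∘ (φ ⇀ ·)`.
Because `Δ ∘ S = (S ⊗ S) ∘ τ ∘ Δ`, the comultiplication of `B ⊗ B` sends `T x` to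
`(x₁ ⊗ S x₃) ⊗ T x₂`, so `(L ⇀ ·) ∘ T = (id ⊗ S ∘ (· ↼ σ)) ∘ Δ`.
Evaluated on `T`, the commutation `L ⋆ μ = μ ⋆ L` says `σ = id ⋆ σ ⋆ S` in the convolution
algebra of `B`; hence `σ ⋆ id = id ⋆ σ`, i.e. `(· ↼ σ) = (σ ⇀ ·)`, and since `σ ⇀ ·` is a map of
left comodules, `(L ⇀ ·) ∘ T = T ∘ (σ ⇀ ·)`. Induction then gives
`L^{⋆(n+1)} ∘ T = L^{⋆n} ∘ T ∘ (σ ⇀ ·) = σ^{⋆n} ⋆ σ`.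
-/

open WithConv

section Convolution

variable {R C A A' : Type*} [CommSemiring R] [AddCommMonoid C] [Module R C] [Coalgebra R C]
  [Semiring A] [Algebra R A] [Semiring A'] [Algebra R A']

theorem map_comp_comul_eq_convMul (f : C →ₗ[R] A) (g : C →ₗ[R] A') :
    toConv (map f g ∘ₗ comul) =
      toConv (Algebra.TensorProduct.includeLeft.toLinearMap ∘ₗ f) *
        toConv ((Algebra.TensorProduct.includeRight : A' →ₐ[R] A ⊗[R] A').toLinearMap ∘ₗ g) := by
  have : LinearMap.mul' R (A ⊗[R] A') ∘ₗ
      map (Algebra.TensorProduct.includeLeft.toLinearMap ∘ₗ f)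
        ((Algebra.TensorProduct.includeRight : A' →ₐ[R] A ⊗[R] A').toLinearMap ∘ₗ g) = map f g := by
    ext; simp
  rw [LinearMap.convMul_def, ofConv_toConv, ofConv_toConv, ← LinearMap.comp_assoc, this]

theorem map_comp_comm_comp_comul_eq_convMul (f : C →ₗ[R] A) (g : C →ₗ[R] A') :
    toConv (map f g ∘ₗ (TensorProduct.comm R C C).toLinearMap ∘ₗ comul) =
      toConv ((Algebra.TensorProduct.includeRight : A' →ₐ[R] A ⊗[R] A').toLinearMap ∘ₗ g) *
        toConv (Algebra.TensorProduct.includeLeft.toLinearMap ∘ₗ f) := by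
  have : LinearMap.mul' R (A ⊗[R] A') ∘ₗ
      map ((Algebra.TensorProduct.includeRight : A' →ₐ[R] A ⊗[R] A').toLinearMap ∘ₗ g)
        (Algebra.TensorProduct.includeLeft.toLinearMap ∘ₗ f) =
      map f g ∘ₗ (TensorProduct.comm R C C).toLinearMap := by
    ext; simp
  rw [LinearMap.convMul_def, ofConv_toConv, ofConv_toConv,
    ← LinearMap.comp_assoc _ _ (LinearMap.mul' R (A ⊗[R] A')), this, LinearMap.comp_assoc]

theorem toConv_algHom_comp_convMul (h : A →ₐ[R] A') (f g : C →ₗ[R] A) :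
    toConv (h.toLinearMap ∘ₗ (toConv f * toConv g).ofConv) =
      toConv (h.toLinearMap ∘ₗ f) * toConv (h.toLinearMap ∘ₗ g) :=
  congrArg toConv (LinearMap.algHom_comp_convMul_distrib h _ _)

theorem toConv_algHom_comp_convOne (h : A →ₐ[R] A') :
    toConv (h.toLinearMap ∘ₗ (1 : WithConv (C →ₗ[R] A)).ofConv) = 1 := by
  ext; simp

end Convolution

namespace HopfAlgebra

variable {R H A : Type*} [CommSemiring R] [Semiring H] [HopfAlgebra R H] [Semiring A]
  [Algebra R A]

theorem toConv_algHom_comp_antipode_mul (h : H →ₐ[R] A) :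
    toConv (h.toLinearMap ∘ₗ antipode R) * toConv h.toLinearMap = 1 := by
  have := toConv_algHom_comp_convMul h (antipode R) LinearMap.id
  rwa [LinearMap.antipode_mul_id, toConv_algHom_comp_convOne, LinearMap.comp_id, eq_comm] at this

/-- `Δ ∘ S` is a right convolution inverse of `Δ`, and `(S ⊗ S) ∘ τ ∘ Δ = (1 ⊗ S) ⋆ (S ⊗ 1)` is a
left one. -/
theorem comul_comp_antipode :
    comul ∘ₗ antipode R =
      map (antipode R) (antipode R) ∘ₗ (TensorProduct.comm R H H).toLinearMap ∘ₗ comul := by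
  have hcomul := map_comp_comul_eq_convMul (R := R) (C := H) (A := H) (A' := H)
    LinearMap.id LinearMap.id
  rw [TensorProduct.map_id, LinearMap.id_comp, LinearMap.comp_id, LinearMap.comp_id] at hcomul
  have hleft : toConv (map (antipode R) (antipode R) ∘ₗ
      (TensorProduct.comm R H H).toLinearMap ∘ₗ comul) * toConv (comul : H →ₗ[R] H ⊗[R] H) = 1 := by
    rw [map_comp_comm_comp_comul_eq_convMul, hcomul, mul_assoc,
      ← mul_assoc _ (toConv Algebra.TensorProduct.includeLeft.toLinearMap),
      toConv_algHom_comp_antipode_mul, one_mul, toConv_algHom_comp_antipode_mul]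
  exact congrArg ofConv (left_inv_eq_right_inv hleft LinearMap.comul_right_inv).symm

end HopfAlgebra

section HitActions

variable {R C A : Type*} [CommSemiring R] [AddCommMonoid C] [Module R C] [Coalgebra R C]
  [Semiring A] [Algebra R A]

/-- `hitLeft f c = f ⇀ c = c₁ f(c₂)` and `hitRight f c = c ↼ f = f(c₁) c₂`. -/
noncomputable def hitLeft (f : C →ₗ[R] R) : C →ₗ[R] C :=
  (TensorProduct.rid R C).toLinearMap ∘ₗ f.lTensor C ∘ₗ comul

noncomputable def hitRight (f : C →ₗ[R] R) : C →ₗ[R] C :=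
  (TensorProduct.lid R C).toLinearMap ∘ₗ f.rTensor C ∘ₗ comul

theorem convMul_algebraMap_comp_eq_comp_hitLeft (g : C →ₗ[R] A) (f : C →ₗ[R] R) :
    toConv g * toConv (Algebra.linearMap R A ∘ₗ f) = toConv (g ∘ₗ hitLeft f) := by
  have : LinearMap.mul' R A ∘ₗ map g (Algebra.linearMap R A ∘ₗ f) =
      g ∘ₗ (TensorProduct.rid R C).toLinearMap ∘ₗ f.lTensor C := by
    ext; simp [Algebra.smul_def, Algebra.commutes]
  rw [LinearMap.convMul_def, ofConv_toConv, ofConv_toConv, ← LinearMap.comp_assoc, this]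
  rfl

theorem algebraMap_comp_convMul_eq_comp_hitRight (f : C →ₗ[R] R) (g : C →ₗ[R] A) :
    toConv (Algebra.linearMap R A ∘ₗ f) * toConv g = toConv (g ∘ₗ hitRight f) := by
  have : LinearMap.mul' R A ∘ₗ map (Algebra.linearMap R A ∘ₗ f) g =
      g ∘ₗ (TensorProduct.lid R C).toLinearMap ∘ₗ f.rTensor C := by
    ext; simp [Algebra.smul_def]
  rw [LinearMap.convMul_def, ofConv_toConv, ofConv_toConv, ← LinearMap.comp_assoc, this]
  rfl

theorem convMul_eq_comp_hitLeft (g f : C →ₗ[R] R) :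
    toConv g * toConv f = toConv (g ∘ₗ hitLeft f) := by
  simpa using convMul_algebraMap_comp_eq_comp_hitLeft g f

theorem comul_comp_hitLeft (f : C →ₗ[R] R) :
    comul ∘ₗ hitLeft f = (hitLeft f).lTensor C ∘ₗ comul := by
  have hρ : comul ∘ₗ (TensorProduct.rid R C).toLinearMap =
      (TensorProduct.rid R (C ⊗[R] C)).toLinearMap ∘ₗ comul.rTensor R := by
    ext; simp
  have hα : (TensorProduct.rid R (C ⊗[R] C)).toLinearMap ∘ₗ f.lTensor (C ⊗[R] C) =
      ((TensorProduct.rid R C).toLinearMap ∘ₗ f.lTensor C).lTensor C ∘ₗ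
        (TensorProduct.assoc R C C C).toLinearMap := by
    ext; simp
  calc comul ∘ₗ hitLeft f
      = (TensorProduct.rid R (C ⊗[R] C)).toLinearMap ∘ₗ f.lTensor (C ⊗[R] C) ∘ₗ
          comul.rTensor C ∘ₗ comul := by
        simp only [hitLeft, ← LinearMap.comp_assoc, hρ]
        simp only [coassoc_simps]
    _ = (hitLeft f).lTensor C ∘ₗ comul := by
        simp only [← LinearMap.comp_assoc, hα]
        simp only [hitLeft, coassoc_simps]

theorem hitLeft_counit : hitLeft (Coalgebra.counit : C →ₗ[R] R) = LinearMap.id := by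
  rw [hitLeft, Coalgebra.lTensor_counit_comp_comul]
  ext; simp

/-- Both sides send `x` to `(x₁ ⊗ x₄) ⊗ (x₂ ⊗ x₃)`. -/
theorem tensorTensorTensorComm_comp_map_comul_comm_comul :
    (tensorTensorTensorComm R C C C C).toLinearMap ∘ₗ
        map comul ((TensorProduct.comm R C C).toLinearMap ∘ₗ comul) ∘ₗ comul =
      comul.lTensor (C ⊗[R] C) ∘ₗ (rightComm R C C C).toLinearMap ∘ₗ comul.rTensor C ∘ₗ comul := by
  have h : (tensorTensorTensorComm R C C C C).toLinearMap ∘ₗ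
        (TensorProduct.comm R C C).toLinearMap.lTensor _ ∘ₗ
          (TensorProduct.assoc R (C ⊗[R] C) C C).toLinearMap =
      (rightComm R C (C ⊗[R] C) C).toLinearMap ∘ₗ
        (TensorProduct.assoc R C C C).toLinearMap.rTensor C := by
    ext; rfl
  calc _ = ((tensorTensorTensorComm R C C C C).toLinearMap ∘ₗ
        (TensorProduct.comm R C C).toLinearMap.lTensor _ ∘ₗ
          (TensorProduct.assoc R (C ⊗[R] C) C C).toLinearMap) ∘ₗ
            (comul.rTensor C ∘ₗ comul).rTensor C ∘ₗ (comul : C →ₗ[R] C ⊗[R] C) := by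
        simp only [coassoc_simps]
    _ = _ := by rw [h]; simp only [coassoc_simps]

end HitActions

section TwistedComul

variable {R H : Type*} [CommSemiring R] [Semiring H] [HopfAlgebra R H]

noncomputable def twistedComul : H →ₗ[R] H ⊗[R] H :=
  map LinearMap.id (HopfAlgebra.antipode R) ∘ₗ comul

theorem counit_comp_twistedComul :
    Coalgebra.counit ∘ₗ (twistedComul : H →ₗ[R] H ⊗[R] H) = Coalgebra.counit := by
  simp only [twistedComul, TensorProduct.counit_def, coassoc_simps,
    HopfAlgebra.counit_comp_antipode, CoassocSimps.map_counit_comp_comul_right]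
  ext; simp

theorem mul'_twistedComul (a : H) :
    LinearMap.mul' R H (twistedComul a) = algebraMap R H (Coalgebra.counit a) :=
  HopfAlgebra.mul_antipode_lTensor_comul_apply a

/-- In Sweedler notation, with `T = twistedComul`: `Δ (T x) = (x₁ ⊗ S x₃) ⊗ T x₂`. -/
theorem comul_comp_twistedComul :
    comul ∘ₗ (twistedComul : H →ₗ[R] H ⊗[R] H) =
      map (map LinearMap.id (HopfAlgebra.antipode R)) twistedComul ∘ₗ
        (rightComm R H H H).toLinearMap ∘ₗ comul.rTensor H ∘ₗ comul := by
  calc comul ∘ₗ (twistedComul : H →ₗ[R] H ⊗[R] H)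
      = (tensorTensorTensorComm R H H H H).toLinearMap ∘ₗ
          map comul (comul ∘ₗ HopfAlgebra.antipode R) ∘ₗ comul := by
        simp only [twistedComul, TensorProduct.comul_def, coassoc_simps]
    _ = map (map LinearMap.id (HopfAlgebra.antipode R))
            (map LinearMap.id (HopfAlgebra.antipode R)) ∘ₗ
          (tensorTensorTensorComm R H H H H).toLinearMap ∘ₗ
            map comul ((TensorProduct.comm R H H).toLinearMap ∘ₗ comul) ∘ₗ comul := by
        have hS : map (comul : H →ₗ[R] H ⊗[R] H) (map (HopfAlgebra.antipode R)
              (HopfAlgebra.antipode R) ∘ₗ (TensorProduct.comm R H H).toLinearMap ∘ₗ comul) =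
            map (map LinearMap.id LinearMap.id)
                (map (HopfAlgebra.antipode R) (HopfAlgebra.antipode R)) ∘ₗ
              map comul ((TensorProduct.comm R H H).toLinearMap ∘ₗ comul) := by
          rw [← map_comp, map_id, LinearMap.id_comp]
        rw [HopfAlgebra.comul_comp_antipode, hS]
        simp only [← LinearMap.comp_assoc, tensorTensorTensorComm_comp_map]
    _ = _ := by
        rw [tensorTensorTensorComm_comp_map_comul_comm_comul, twistedComul]
        simp only [coassoc_simps]

theorem hitLeft_comp_twistedComul (L : H ⊗[R] H →ₗ[R] R) :
    hitLeft L ∘ₗ twistedComul =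
      (HopfAlgebra.antipode R ∘ₗ hitRight (L ∘ₗ twistedComul)).lTensor H ∘ₗ comul := by
  have h : (TensorProduct.rid R (H ⊗[R] H)).toLinearMap ∘ₗ
        map (map LinearMap.id (HopfAlgebra.antipode R)) (L ∘ₗ twistedComul) ∘ₗ
          (rightComm R H H H).toLinearMap =
      (HopfAlgebra.antipode R ∘ₗ (TensorProduct.lid R H).toLinearMap ∘ₗ
          (L ∘ₗ twistedComul).rTensor H).lTensor H ∘ₗ
        (TensorProduct.assoc R H H H).toLinearMap := by
    ext; simp
  calc hitLeft L ∘ₗ twistedComul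
      = (TensorProduct.rid R (H ⊗[R] H)).toLinearMap ∘ₗ
          map (map LinearMap.id (HopfAlgebra.antipode R)) (L ∘ₗ twistedComul) ∘ₗ
            (rightComm R H H H).toLinearMap ∘ₗ comul.rTensor H ∘ₗ comul := by
        rw [hitLeft, LinearMap.comp_assoc, LinearMap.comp_assoc, comul_comp_twistedComul]
        simp only [coassoc_simps]
    _ = _ := by
        simp only [← LinearMap.comp_assoc, h]
        simp only [LinearMap.comp_assoc, hitRight, coassoc_simps]

theorem mul'_comp_hitRight_comp_twistedComul (L : H ⊗[R] H →ₗ[R] R) :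
    LinearMap.mul' R H ∘ₗ hitRight L ∘ₗ twistedComul =
      Algebra.linearMap R H ∘ₗ L ∘ₗ twistedComul := by
  have h : LinearMap.mul' R H ∘ₗ (TensorProduct.lid R (H ⊗[R] H)).toLinearMap ∘ₗ
        map (L ∘ₗ map LinearMap.id (HopfAlgebra.antipode R)) twistedComul ∘ₗ
          (rightComm R H H H).toLinearMap =
      Algebra.linearMap R H ∘ₗ L ∘ₗ map LinearMap.id (HopfAlgebra.antipode R) ∘ₗ
        ((TensorProduct.rid R H).toLinearMap ∘ₗ
          (Coalgebra.counit (R := R) (A := H)).lTensor H).rTensor H := by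
    ext a b c
    simp [mul'_twistedComul]
    rw [← TensorProduct.smul_tmul', LinearMap.map_smul, smul_eq_mul, Algebra.smul_def, ← map_mul,
      mul_comm]
  have hε : ((TensorProduct.rid R H).toLinearMap ∘ₗ
        (Coalgebra.counit (R := R) (A := H)).lTensor H).rTensor H ∘ₗ
          comul.rTensor H ∘ₗ comul = comul := by
    rw [← LinearMap.comp_assoc, ← LinearMap.rTensor_comp, LinearMap.comp_assoc,
      ← hitLeft.eq_def, hitLeft_counit, LinearMap.rTensor_id, LinearMap.id_comp]
  calc LinearMap.mul' R H ∘ₗ hitRight L ∘ₗ twistedComul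
      = (LinearMap.mul' R H ∘ₗ (TensorProduct.lid R (H ⊗[R] H)).toLinearMap ∘ₗ
          map (L ∘ₗ map LinearMap.id (HopfAlgebra.antipode R)) twistedComul ∘ₗ
            (rightComm R H H H).toLinearMap) ∘ₗ comul.rTensor H ∘ₗ comul := by
        simp only [hitRight, LinearMap.comp_assoc]
        rw [comul_comp_twistedComul]
        simp only [coassoc_simps]
    _ = Algebra.linearMap R H ∘ₗ L ∘ₗ twistedComul := by
        rw [h]
        simp only [LinearMap.comp_assoc, hε]
        rfl

/-- On `T`, the hypothesis `L ⋆ μ = μ ⋆ L` reads `σ = id ⋆ σ ⋆ S`; multiplying on the right by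
`id` and using `S ⋆ id = 1` gives `σ ⋆ id = id ⋆ σ`. -/
theorem hitLeft_eq_hitRight_of_commute {L : H ⊗[R] H →ₗ[R] R}
    (hcomm : LinearMap.mul' R H ∘ₗ hitRight L = LinearMap.mul' R H ∘ₗ hitLeft L) :
    hitLeft (L ∘ₗ twistedComul) = hitRight (L ∘ₗ twistedComul) := by
  have key : toConv (Algebra.linearMap R H ∘ₗ L ∘ₗ twistedComul) =
      toConv LinearMap.id * toConv (Algebra.linearMap R H ∘ₗ L ∘ₗ twistedComul) *
        toConv (HopfAlgebra.antipode R) := by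
    calc toConv (Algebra.linearMap R H ∘ₗ L ∘ₗ twistedComul)
        = toConv (LinearMap.mul' R H ∘ₗ hitLeft L ∘ₗ twistedComul) := by
          rw [← mul'_comp_hitRight_comp_twistedComul, ← LinearMap.comp_assoc, hcomm,
            LinearMap.comp_assoc]
      _ = toConv LinearMap.id *
            toConv (HopfAlgebra.antipode R ∘ₗ hitRight (L ∘ₗ twistedComul)) := by
          rw [hitLeft_comp_twistedComul]; rfl
      _ = _ := by rw [← algebraMap_comp_convMul_eq_comp_hitRight, mul_assoc]
  calc hitLeft (L ∘ₗ twistedComul)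
      = (toConv LinearMap.id * toConv (Algebra.linearMap R H ∘ₗ L ∘ₗ twistedComul) *
          (toConv (HopfAlgebra.antipode R) * toConv LinearMap.id)).ofConv := by
        rw [LinearMap.antipode_mul_id, mul_one, convMul_algebraMap_comp_eq_comp_hitLeft]; rfl
    _ = (toConv (Algebra.linearMap R H ∘ₗ L ∘ₗ twistedComul) * toConv LinearMap.id).ofConv := by
        rw [← mul_assoc, ← key]
    _ = hitRight (L ∘ₗ twistedComul) := by rw [algebraMap_comp_convMul_eq_comp_hitRight]; rfl

theorem hitLeft_comp_twistedComul_of_commute {L : H ⊗[R] H →ₗ[R] R}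
    (hcomm : LinearMap.mul' R H ∘ₗ hitRight L = LinearMap.mul' R H ∘ₗ hitLeft L) :
    hitLeft L ∘ₗ twistedComul = twistedComul ∘ₗ hitLeft (L ∘ₗ twistedComul) := by
  rw [hitLeft_comp_twistedComul, ← hitLeft_eq_hitRight_of_commute hcomm, LinearMap.lTensor_comp,
    LinearMap.comp_assoc, ← comul_comp_hitLeft, twistedComul, LinearMap.comp_assoc]
  rfl

theorem convPow_comp_twistedComul_of_commute {L : H ⊗[R] H →ₗ[R] R}
    (hcomm : LinearMap.mul' R H ∘ₗ hitRight L = LinearMap.mul' R H ∘ₗ hitLeft L) (n : ℕ) :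
    (toConv L ^ n).ofConv ∘ₗ twistedComul = (toConv (L ∘ₗ twistedComul) ^ n).ofConv := by
  induction n with
  | zero => exact counit_comp_twistedComul
  | succ n ih =>
    rw [pow_succ, pow_succ, convMul_eq_comp_hitLeft, convMul_eq_comp_hitLeft,
      ofConv_toConv, ofConv_toConv, LinearMap.comp_assoc,
      hitLeft_comp_twistedComul_of_commute hcomm, ← LinearMap.comp_assoc, ih]

end TwistedComul

theorem convPowWith_comul_counit {C : Type} [AddCommGroup C] [Module ℂ C] [Coalgebra ℂ C]
    (φ : C →ₗ[ℂ] ℂ) (n : ℕ) :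
    convPowWith comul counit φ n = (toConv φ ^ n).ofConv := by
  induction n with
  | zero => ext; simp [convPowWith]
  | succ n ih => rw [convPowWith, ih, pow_succ']; rfl

theorem Lam_eq_comul : Lam (B := B) = comul := rfl

theorem counit2_eq_counit : counit2 (B := B) = counit := by
  ext; simp [counit2, mul_comm]

theorem LconvMu_eq_mul'_comp_hitRight (L : B ⊗[ℂ] B →ₗ[ℂ] ℂ) :
    LconvMu L = LinearMap.mul' ℂ B ∘ₗ hitRight L := by
  have : (TensorProduct.lid ℂ B).toLinearMap ∘ₗ map L (LinearMap.mul' ℂ B) =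
      LinearMap.mul' ℂ B ∘ₗ (TensorProduct.lid ℂ (B ⊗[ℂ] B)).toLinearMap ∘ₗ L.rTensor _ := by
    ext; simp
  rw [LconvMu, ← LinearMap.comp_assoc, this]
  rfl

theorem MuConvL_eq_mul'_comp_hitLeft (L : B ⊗[ℂ] B →ₗ[ℂ] ℂ) :
    MuConvL L = LinearMap.mul' ℂ B ∘ₗ hitLeft L := by
  have : (TensorProduct.rid ℂ B).toLinearMap ∘ₗ map (LinearMap.mul' ℂ B) L =
      LinearMap.mul' ℂ B ∘ₗ (TensorProduct.rid ℂ (B ⊗[ℂ] B)).toLinearMap ∘ₗ L.lTensor _ := by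
    ext; simp
  rw [MuConvL, ← LinearMap.comp_assoc, this]
  rfl

theorem stmt15_general (L : B ⊗[ℂ] B →ₗ[ℂ] ℂ)
    (hcomm : LconvMu L = MuConvL L) :
    ∀ n : ℕ,
      convPowWith Lam counit2 L n ∘ₗ
          TensorProduct.map LinearMap.id (HopfAlgebra.antipode (R := ℂ)) ∘ₗ comul (R := ℂ)
        = convPowWith (comul (R := ℂ)) (counit (R := ℂ)) (sigma L) n := by
  intro n
  rw [LconvMu_eq_mul'_comp_hitRight, MuConvL_eq_mul'_comp_hitLeft] at hcomm
  rw [Lam_eq_comul, counit2_eq_counit, convPowWith_comul_counit, convPowWith_comul_counit]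
  exact convPow_comp_twistedComul_of_commute hcomm n

/-- Let `B` be a Hopf algebra, `L` a normalized commuting 2-cocycle and
`σ = L ∘ (id ⊗ S) ∘ Δ`.  Then for every `n ≥ 0`, `L^{⋆n} ∘ (id ⊗ S) ∘ Δ = σ^{⋆n}`, where
the convolution powers are taken on `B ⊗ B` and on `B` respectively. -/
theorem stmt15 (L : B ⊗[ℂ] B →ₗ[ℂ] ℂ)
    (hnorm : L (1 ⊗ₜ[ℂ] 1) = 0)
    (hcomm : LconvMu L = MuConvL L)
    (hcocycle : ∀ a b c : B,
      counit (R := ℂ) a * L (b ⊗ₜ[ℂ] c) - L ((a * b) ⊗ₜ[ℂ] c)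
        + L (a ⊗ₜ[ℂ] (b * c)) - L (a ⊗ₜ[ℂ] b) * counit (R := ℂ) c = 0) :
    ∀ n : ℕ,
      convPowWith Lam counit2 L n ∘ₗ
          TensorProduct.map LinearMap.id (HopfAlgebra.antipode (R := ℂ)) ∘ₗ comul (R := ℂ)
        = convPowWith (comul (R := ℂ)) (counit (R := ℂ)) (sigma L) n :=
  stmt15_general L hcomm
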